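/- arXiv:2201.10699 — 5 statements merged into one kernel-verified Lean document; each statement's English description precedes it below -/
import Mathlib

section
/- Let G be a graph on n ≥ 1 vertices, let j and r be positive integers, and let p = p_r(G). Then the sum over all sequences S of j vertices of G (with repetition allowed) of |N(S)|^r is at least n^{j+r} p^{jr}, where N(S) is the set of common neighbors of all vertices in S. -/
def commNbhd {V : Type} (G : SimpleGraph V) {j : ℕ} (S : Fin j → V) : Set V :=
  {v | ∀ a : Fin j, G.Adj (S a) v}

noncomputable def rnormDensity {V : Type} [Fintype V] (G : SimpleGraph V)
    [DecidableRel G.Adj] (r : ℕ) : ℝ :=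
  ((∑ v : V, (G.degree v : ℝ) ^ r) / (Fintype.card V : ℝ) ^ (r + 1)) ^ ((r : ℝ)⁻¹)

/-- **Lemma 2.4, first part.** `∑_{S ∈ [V(G)]^j} |N(S)|^r ≥ n^{j+r} p_r(G)^{jr}`. -/
theorem sum_commNbhd_pow_ge {V : Type} [Fintype V] [Nonempty V]
    (G : SimpleGraph V) [DecidableRel G.Adj] (j r : ℕ) (hj : 0 < j) (hr : 0 < r) :
    (Fintype.card V : ℝ) ^ (j + r) * rnormDensity G r ^ (j * r) ≤
      ∑ S : Fin j → V, (Nat.card (commNbhd G S) : ℝ) ^ r := by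
  classical
  set n : ℕ := Fintype.card V with hn
  have hn0 : 0 < n := Fintype.card_pos
  set f : V → V → ℝ := fun x y => if G.Adj x y then 1 else 0 with hf
  have hfsymm : ∀ x y, f x y = f y x := by
    intro x y; simp only [hf]; exact if_congr (G.adj_comm x y) rfl rfl
  -- cardinality of common neighborhoods as indicator sums
  have hcard : ∀ {k : ℕ} (S : Fin k → V), (Nat.card (commNbhd G S) : ℝ)
      = ∑ v : V, ∏ a, f (S a) v := by
    intro k S
    have h1 : Nat.card (commNbhd G S)
        = (Finset.univ.filter fun v => ∀ a, G.Adj (S a) v).card := by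
      rw [Nat.card_eq_fintype_card]
      apply Fintype.card_of_subtype
      intro v; simp [commNbhd]
    rw [h1]
    rw [Finset.card_filter]
    push_cast
    refine Finset.sum_congr rfl fun v _ => ?_
    simp [hf, Fintype.prod_boole]
  -- degree as indicator sum
  have hdeg : ∀ u : V, (∑ w : V, f u w) = (G.degree u : ℝ) := by
    intro u
    simp only [hf]
    rw [Finset.sum_boole]
    congr 1
    rw [← SimpleGraph.neighborFinset_eq_filter, SimpleGraph.card_neighborFinset_eq_degree]
  set D : ℝ := ∑ v : V, (G.degree v : ℝ) ^ r with hD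
  have hDnn : 0 ≤ D := Finset.sum_nonneg fun v _ => by positivity
  -- double counting: swap j and r
  have hswap : (∑ S : Fin j → V, (Nat.card (commNbhd G S) : ℝ) ^ r)
      = ∑ T : Fin r → V, (Nat.card (commNbhd G T) : ℝ) ^ j := by
    have key : ∀ (S : Fin j → V), (Nat.card (commNbhd G S) : ℝ) ^ r
        = ∑ T : Fin r → V, ∏ i, ∏ a, f (S a) (T i) := by
      intro S
      rw [hcard, Fintype.sum_pow]
    rw [Finset.sum_congr rfl fun S _ => key S, Finset.sum_comm]
    refine Finset.sum_congr rfl fun T _ => ?_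
    rw [hcard, Fintype.sum_pow]
    refine Finset.sum_congr rfl fun S _ => ?_
    rw [Finset.prod_comm]
    exact Finset.prod_congr rfl fun a _ => Finset.prod_congr rfl fun i _ => by
      rw [hfsymm]
  -- total count: ∑_T |N(T)| = D
  have htot : (∑ T : Fin r → V, (Nat.card (commNbhd G T) : ℝ)) = D := by
    have : ∀ T : Fin r → V, (Nat.card (commNbhd G T) : ℝ)
        = ∑ v : V, ∏ i, f v (T i) := by
      intro T; rw [hcard]
      exact Finset.sum_congr rfl fun v _ => Finset.prod_congr rfl fun i _ => hfsymm _ _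
    rw [Finset.sum_congr rfl fun T _ => this T, Finset.sum_comm]
    refine Finset.sum_congr rfl fun v _ => ?_
    rw [← Fintype.sum_pow, hdeg]
  -- Jensen
  obtain ⟨j', rfl⟩ : ∃ j', j = j' + 1 := ⟨j - 1, (Nat.succ_pred_eq_of_pos hj).symm⟩
  have hjensen := pow_sum_div_card_le_sum_pow
    (s := (Finset.univ : Finset (Fin r → V)))
    (f := fun T => (Nat.card (commNbhd G T) : ℝ))
    (fun T _ => by positivity) j'
  rw [htot, Finset.card_univ, Fintype.card_fun, Fintype.card_fin, ← hn] at hjensen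
  rw [hswap]
  -- compute LHS
  have hpow : rnormDensity G r ^ ((j' + 1) * r) = (D / (n : ℝ) ^ (r + 1)) ^ (j' + 1) := by
    rw [rnormDensity, ← hD, ← hn]
    have hx : (0 : ℝ) ≤ D / (n : ℝ) ^ (r + 1) := by positivity
    rw [← Real.rpow_natCast ((D / (n:ℝ) ^ (r+1)) ^ ((r:ℝ)⁻¹)) ((j'+1)*r),
        ← Real.rpow_mul hx, ← Real.rpow_natCast (D / (n:ℝ) ^ (r+1)) (j'+1)]
    congr 1
    push_cast
    field_simp
  rw [hpow, div_pow, mul_div_assoc']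
  refine le_trans (le_of_eq ?_) hjensen
  
  push_cast
  rw [div_eq_div_iff (by positivity) (by positivity), ← pow_mul, ← pow_mul,
    show (r+1)*(j'+1) = (j'+1+r) + r*j' from by ring, pow_add]
  ring
end

section
/- Let G be a graph on n ≥ 1 vertices, let j and r be positive integers with p = p_r(G) > 4j·n^{-1/r}. Then the sum over all sequences S of j pairwise distinct vertices of G of |N(S)|^r is at least (1/2^{j+1}) n^{j+r} p^{jr}. -/
open Finset

theorem descFac_bound (m j : ℕ) (h : 2 * j ≤ m) : m ^ j ≤ 2 ^ j * m.descFactorial j := by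
  rw [Nat.descFactorial_eq_prod_range]
  calc m ^ j = ∏ _i ∈ range j, m := by rw [Finset.prod_const, card_range]
    _ ≤ ∏ i ∈ range j, 2 * (m - i) := by
        apply Finset.prod_le_prod' ; intro i hi
        have := mem_range.mp hi; omega
    _ = 2 ^ j * ∏ i ∈ range j, (m - i) := by
        rw [Finset.prod_mul_distrib, Finset.prod_const, card_range]

theorem card_filter_all_mem {V : Type} [Fintype V] [DecidableEq V] (r : ℕ) (T : Finset V) :
    ((Finset.univ : Finset (Fin r → V)).filter (fun U => ∀ k, U k ∈ T)).card
      = T.card ^ r := by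
  classical
  have : ((Finset.univ : Finset (Fin r → V)).filter (fun U => ∀ k, U k ∈ T))
      = Fintype.piFinset (fun _ : Fin r => T) := by
    ext U; simp [Fintype.mem_piFinset]
  rw [this, Fintype.card_piFinset]
  simp

theorem card_filter_inj_mem {V : Type} [Fintype V] [DecidableEq V] (j : ℕ) (T : Finset V) :
    ((Finset.univ : Finset (Fin j → V)).filter
        (fun S => Function.Injective S ∧ ∀ a, S a ∈ T)).card
      = T.card.descFactorial j := by
  classical
  have h1 : (Finset.univ : Finset (Fin j ↪ ↥T)).card = T.card.descFactorial j := by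
    rw [Finset.card_univ, Fintype.card_embedding_eq, Fintype.card_fin, Fintype.card_coe]
  rw [← h1]
  refine Finset.card_bij'
    (fun S hS => (⟨fun a => (⟨S a, (Finset.mem_filter.mp hS).2.2 a⟩ : ↥T),
      fun a b hab => (Finset.mem_filter.mp hS).2.1 (Subtype.ext_iff.mp hab)⟩ : Fin j ↪ ↥T))
    (fun e _ => fun a => (e a : V)) ?_ ?_ ?_ ?_
  · intro S hS; exact Finset.mem_univ _
  · intro e he
    refine Finset.mem_filter.mpr ⟨Finset.mem_univ _, ?_, ?_⟩
    · intro a b hab; exact e.injective (Subtype.ext hab)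
    · intro a; exact (e a).2
  · intro S hS; rfl
  · intro e he; ext a; rfl

open scoped Classical in
theorem swap_count {V : Type} [Fintype V] (G : SimpleGraph V) [DecidableRel G.Adj] (j r : ℕ) :
    ∑ S ∈ Finset.univ.filter (fun S : Fin j → V => Function.Injective S),
        ((Finset.univ.filter (fun v => ∀ a, G.Adj (S a) v)).card) ^ r
    = ∑ U : Fin r → V,
        ((Finset.univ.filter (fun v : V => ∀ k, G.Adj (U k) v)).card).descFactorial j := by
  classical
  calc ∑ S ∈ Finset.univ.filter (fun S : Fin j → V => Function.Injective S),
        ((Finset.univ.filter (fun v => ∀ a, G.Adj (S a) v)).card) ^ r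
      = ∑ S ∈ Finset.univ.filter (fun S : Fin j → V => Function.Injective S),
          ∑ U : Fin r → V, if ∀ k, U k ∈ Finset.univ.filter (fun v => ∀ a, G.Adj (S a) v) then 1 else 0 := by
        refine Finset.sum_congr rfl fun S _ => ?_
        rw [← Finset.card_filter, card_filter_all_mem]
    _ = ∑ U : Fin r → V, ∑ S ∈ Finset.univ.filter (fun S : Fin j → V => Function.Injective S),
          if ∀ k, U k ∈ Finset.univ.filter (fun v => ∀ a, G.Adj (S a) v) then 1 else 0 :=
        Finset.sum_comm
    _ = ∑ U : Fin r → V,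
        ((Finset.univ.filter (fun v : V => ∀ k, G.Adj (U k) v)).card).descFactorial j := by
        refine Finset.sum_congr rfl fun U _ => ?_
        rw [← Finset.card_filter, Finset.filter_filter, ← card_filter_inj_mem]
        congr 1
        apply Finset.filter_congr
        intro S _
        simp only [Finset.mem_filter, Finset.mem_univ, true_and]
        constructor
        · rintro ⟨hI, hA⟩; exact ⟨hI, fun a k => (hA k a).symm⟩
        · rintro ⟨hI, hA⟩; exact ⟨hI, fun k a => (hA a k).symm⟩

open scoped Classical in
theorem sum_card_M {V : Type} [Fintype V] (G : SimpleGraph V) [DecidableRel G.Adj] (r : ℕ) :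
    ∑ U : Fin r → V, (Finset.univ.filter (fun v : V => ∀ k, G.Adj (U k) v)).card
      = ∑ v : V, (G.degree v) ^ r := by
  classical
  calc ∑ U : Fin r → V, (Finset.univ.filter (fun v : V => ∀ k, G.Adj (U k) v)).card
      = ∑ U : Fin r → V, ∑ v : V, if ∀ k, G.Adj (U k) v then 1 else 0 := by
        refine Finset.sum_congr rfl fun U _ => ?_
        rw [← Finset.card_filter]
    _ = ∑ v : V, ∑ U : Fin r → V, if ∀ k, G.Adj (U k) v then 1 else 0 := Finset.sum_comm
    _ = ∑ v : V, (G.degree v) ^ r := by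
        refine Finset.sum_congr rfl fun v _ => ?_
        rw [← Finset.card_filter]
        rw [show Finset.univ.filter (fun U : Fin r → V => ∀ k, G.Adj (U k) v)
            = Finset.univ.filter (fun U : Fin r → V => ∀ k, U k ∈ G.neighborFinset v) by
          apply Finset.filter_congr; intro U _
          simp [SimpleGraph.mem_neighborFinset, G.adj_comm]]
        rw [card_filter_all_mem, SimpleGraph.card_neighborFinset_eq_degree]

open scoped Classical in
/-- **Lemma 2.4, second part.** If `p_r(G) > 4j n^{-1/r}` then the sum of `|N(S)|^r`
over sequences `S` of `j` pairwise distinct vertices is at least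
`(1/2^{j+1}) n^{j+r} p_r(G)^{jr}`. -/
theorem sum_commNbhd_pow_injective_ge {V : Type} [Fintype V] [Nonempty V]
    (G : SimpleGraph V) [DecidableRel G.Adj] (j r : ℕ) (hj : 0 < j) (hr : 0 < r)
    (hp : rnormDensity G r > 4 * j * (Fintype.card V : ℝ) ^ (-(r : ℝ)⁻¹)) :
    (1 / 2 ^ (j + 1)) * (Fintype.card V : ℝ) ^ (j + r) * rnormDensity G r ^ (j * r) ≤
      ∑ S ∈ Finset.univ.filter (fun S : Fin j → V => Function.Injective S),
        (Nat.card (commNbhd G S) : ℝ) ^ r := by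
  classical
  obtain ⟨j', rfl⟩ : ∃ j', j = j' + 1 := ⟨j - 1, (Nat.succ_pred_eq_of_pos hj).symm⟩
  set j := j' + 1
  set n := Fintype.card V with hn
  have hn0 : (0:ℝ) < (n:ℝ) := by exact_mod_cast Fintype.card_pos
  set D : ℝ := ∑ v : V, (G.degree v : ℝ) ^ r with hD
  have hD0 : (0:ℝ) ≤ D := Finset.sum_nonneg fun v _ => by positivity
  have hx0 : (0:ℝ) ≤ D / (n:ℝ) ^ (r + 1) := by positivity
  set p := rnormDensity G r with hpdef
  have hp0 : 0 ≤ p := by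
    rw [hpdef, rnormDensity]
    exact Real.rpow_nonneg hx0 _
  have hpr : p ^ r = D / (n:ℝ) ^ (r + 1) := by
    rw [hpdef, rnormDensity, ← Real.rpow_natCast (_ ^ ((r:ℝ)⁻¹)) r, ← Real.rpow_mul hx0,
      inv_mul_cancel₀ (by exact_mod_cast hr.ne' : (r:ℝ) ≠ 0), Real.rpow_one]
  -- consequence of the hypothesis
  have hjpos : (0:ℝ) < (j:ℝ) := by exact_mod_cast hj
  have hnr : (0:ℝ) < (n:ℝ) ^ ((r:ℝ)⁻¹) := Real.rpow_pos_of_pos hn0 _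
  have hq : 4 * (j:ℝ) ≤ (n:ℝ) ^ ((r:ℝ)⁻¹) * p := by
    have h1 : (n:ℝ) ^ ((r:ℝ)⁻¹) * ((n:ℝ) ^ (-(r:ℝ)⁻¹)) = 1 := by
      rw [← Real.rpow_add hn0]; simp
    have h2 : (n:ℝ) ^ ((r:ℝ)⁻¹) * (4 * j * (n:ℝ) ^ (-(r:ℝ)⁻¹)) < (n:ℝ) ^ ((r:ℝ)⁻¹) * p :=
      mul_lt_mul_of_pos_left hp hnr
    calc 4 * (j:ℝ) = (n:ℝ) ^ ((r:ℝ)⁻¹) * (4 * j * (n:ℝ) ^ (-(r:ℝ)⁻¹)) := by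
          rw [show (n:ℝ) ^ ((r:ℝ)⁻¹) * (4 * j * (n:ℝ) ^ (-(r:ℝ)⁻¹))
              = (4 * j) * ((n:ℝ) ^ ((r:ℝ)⁻¹) * ((n:ℝ) ^ (-(r:ℝ)⁻¹))) by ring, h1, mul_one]
      _ ≤ (n:ℝ) ^ ((r:ℝ)⁻¹) * p := h2.le
  have hkey : 2 * (2 * (j:ℝ)) ^ j ≤ (n:ℝ) ^ (j:ℕ) * p ^ (j * r) := by
    have h1 : (4 * (j:ℝ)) ^ (j * r) ≤ ((n:ℝ) ^ ((r:ℝ)⁻¹) * p) ^ (j * r) :=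
      pow_le_pow_left₀ (by positivity) hq _
    have h2 : ((n:ℝ) ^ ((r:ℝ)⁻¹) * p) ^ (j * r) = (n:ℝ) ^ (j:ℕ) * p ^ (j * r) := by
      rw [mul_pow]
      congr 1
      rw [← Real.rpow_natCast ((n:ℝ) ^ ((r:ℝ)⁻¹)) (j * r), ← Real.rpow_mul hn0.le]
      rw [show (r:ℝ)⁻¹ * ((j * r : ℕ) : ℝ) = (j:ℝ) by
        push_cast; field_simp]
      exact Real.rpow_natCast _ j
    have hj1 : (1:ℝ) ≤ (j:ℝ) := by exact_mod_cast hj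
    have h3 : 2 * (2 * (j:ℝ)) ^ j ≤ (4 * (j:ℝ)) ^ j := by
      have hfe : (4 * (j:ℝ)) ^ j = 2 ^ j * (2 * (j:ℝ)) ^ j := by
        rw [show (4:ℝ) * (j:ℝ) = 2 * (2 * (j:ℝ)) by ring, mul_pow]
      rw [hfe]
      have h2j : (2:ℝ) ≤ 2 ^ j := by
        calc (2:ℝ) = 2 ^ 1 := (pow_one 2).symm
        _ ≤ 2 ^ j := pow_le_pow_right₀ (by norm_num) hj
      have hnn : (0:ℝ) ≤ (2 * (j:ℝ)) ^ j := by positivity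
      nlinarith
    have h4 : (4 * (j:ℝ)) ^ j ≤ (4 * (j:ℝ)) ^ (j * r) :=
      pow_le_pow_right₀ (by linarith) (Nat.le_mul_of_pos_right j hr)
    calc 2 * (2 * (j:ℝ)) ^ j ≤ (4 * (j:ℝ)) ^ j := h3
      _ ≤ (4 * (j:ℝ)) ^ (j * r) := h4
      _ ≤ ((n:ℝ) ^ ((r:ℝ)⁻¹) * p) ^ (j * r) := h1
      _ = (n:ℝ) ^ (j:ℕ) * p ^ (j * r) := h2
  -- the main counting
  set M : (Fin r → V) → Finset V :=
    fun U => Finset.univ.filter (fun v : V => ∀ k, G.Adj (U k) v) with hM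
  set Q : ℝ := (n:ℝ) ^ (j + r) * p ^ (j * r) with hQ
  have hQ0 : 0 ≤ Q := by positivity
  -- Q in terms of D
  have hQform : Q = D ^ j / ((n:ℝ) ^ r) ^ j' := by
    have hpjr : p ^ (j * r) = (D / (n:ℝ) ^ (r + 1)) ^ j := by
      rw [mul_comm j r, pow_mul, hpr]
    rw [hQ, hpjr, div_pow]
    have hexp : (r + 1) * j = (j + r) + r * j' := by simp only [j]; ring
    rw [← pow_mul, hexp, pow_add, ← pow_mul]
    field_simp
    ring
  -- Jensen: Q ≤ ∑ (M U).card ^ j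
  have hMD : ∑ U : Fin r → V, ((M U).card : ℝ) = D := by
    rw [hD, ← Nat.cast_sum]
    rw [show ∑ U : Fin r → V, (M U).card = ∑ v : V, (G.degree v) ^ r from sum_card_M G r]
    push_cast; rfl
  have hJensen : Q ≤ ∑ U : Fin r → V, ((M U).card : ℝ) ^ j := by
    have := pow_sum_div_card_le_sum_pow (s := (Finset.univ : Finset (Fin r → V)))
      (f := fun U => ((M U).card : ℝ)) (fun U _ => by positivity) j'
    rw [hMD] at this
    have hcard : ((Finset.univ : Finset (Fin r → V)).card : ℝ) = (n:ℝ) ^ r := by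
      rw [Finset.card_univ, Fintype.card_fun]
      push_cast; rw [Fintype.card_fin]
    rw [hQform]
    calc D ^ j / ((n:ℝ) ^ r) ^ j' = D ^ (j' + 1) / ((univ : Finset (Fin r → V)).card : ℝ) ^ j' := by
          rw [hcard]
      _ ≤ ∑ U : Fin r → V, ((M U).card : ℝ) ^ (j' + 1) := by
          exact_mod_cast this
      _ = ∑ U : Fin r → V, ((M U).card : ℝ) ^ j := rfl
  -- splitting
  have hsplit : ∀ U : Fin r → V, ((M U).card : ℝ) ^ j
      ≤ 2 ^ j * ((M U).card.descFactorial j : ℝ)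
        + (if (M U).card < 2 * j then (2 * (j:ℝ)) ^ j else 0) := by
    intro U
    by_cases h : 2 * j ≤ (M U).card
    · have := descFac_bound (M U).card j h
      have hcast : ((M U).card : ℝ) ^ j ≤ 2 ^ j * ((M U).card.descFactorial j : ℝ) := by
        exact_mod_cast this
      rw [if_neg (Nat.not_lt.mpr h), add_zero]; exact hcast
    · push_neg at h
      have h1 : ((M U).card : ℝ) ^ j ≤ (2 * (j:ℝ)) ^ j := by
        apply pow_le_pow_left₀ (by positivity)
        exact_mod_cast h.le
      have h2 : (0:ℝ) ≤ 2 ^ j * ((M U).card.descFactorial j : ℝ) := by positivity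
      simp only [if_pos h]
      linarith
  have hsmall : ∑ U : Fin r → V, (if (M U).card < 2 * j then (2 * (j:ℝ)) ^ j else 0)
      ≤ (n:ℝ) ^ r * (2 * (j:ℝ)) ^ j := by
    calc ∑ U : Fin r → V, (if (M U).card < 2 * j then (2 * (j:ℝ)) ^ j else 0)
        ≤ ∑ _U : Fin r → V, (2 * (j:ℝ)) ^ j := by
          apply Finset.sum_le_sum; intro U _
          split
          · exact le_refl _
          · positivity
      _ = ((Finset.univ : Finset (Fin r → V)).card : ℝ) * (2 * (j:ℝ)) ^ j := by
          rw [Finset.sum_const, nsmul_eq_mul]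
      _ = (n:ℝ) ^ r * (2 * (j:ℝ)) ^ j := by
          rw [Finset.card_univ, Fintype.card_fun]; push_cast; rw [Fintype.card_fin]
  have hsmallQ : (n:ℝ) ^ r * (2 * (j:ℝ)) ^ j ≤ Q / 2 := by
    have hQ2 : Q = ((n:ℝ) ^ (j:ℕ) * p ^ (j * r)) * (n:ℝ) ^ r := by
      rw [hQ, pow_add]; ring
    rw [hQ2]
    have hnr0 : (0:ℝ) ≤ (n:ℝ) ^ r := by positivity
    have := mul_le_mul_of_nonneg_right hkey hnr0
    linarith
  -- combining
  set A : ℝ := ∑ U : Fin r → V, ((M U).card.descFactorial j : ℝ) with hA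
  have hmain : Q / 2 ≤ 2 ^ j * A := by
    have h1 : Q ≤ ∑ U : Fin r → V, ((M U).card : ℝ) ^ j := hJensen
    have h2 : ∑ U : Fin r → V, ((M U).card : ℝ) ^ j
        ≤ 2 ^ j * A + (n:ℝ) ^ r * (2 * (j:ℝ)) ^ j := by
      calc ∑ U : Fin r → V, ((M U).card : ℝ) ^ j
          ≤ ∑ U : Fin r → V, (2 ^ j * ((M U).card.descFactorial j : ℝ)
              + (if (M U).card < 2 * j then (2 * (j:ℝ)) ^ j else 0)) :=
            Finset.sum_le_sum fun U _ => hsplit U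
        _ = 2 ^ j * A + ∑ U : Fin r → V, (if (M U).card < 2 * j then (2 * (j:ℝ)) ^ j else 0) := by
            rw [Finset.sum_add_distrib, ← Finset.mul_sum]
        _ ≤ 2 ^ j * A + (n:ℝ) ^ r * (2 * (j:ℝ)) ^ j := by linarith [hsmall]
    linarith [hsmallQ]
  -- identify the target sum with A
  have hNat : ∀ S : Fin j → V, (Nat.card (commNbhd G S) : ℝ)
      = ((Finset.univ.filter (fun v => ∀ a, G.Adj (S a) v)).card : ℝ) := by
    intro S
    congr 1
    rw [show commNbhd G S = {v | ∀ a : Fin j, G.Adj (S a) v} from rfl,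
      Nat.card_eq_fintype_card]
    simp [Fintype.card_subtype]
  have htarget : ∑ S ∈ Finset.univ.filter (fun S : Fin j → V => Function.Injective S),
        (Nat.card (commNbhd G S) : ℝ) ^ r = A := by
    rw [hA]
    have := swap_count G j r
    calc ∑ S ∈ Finset.univ.filter (fun S : Fin j → V => Function.Injective S),
          (Nat.card (commNbhd G S) : ℝ) ^ r
        = ∑ S ∈ Finset.univ.filter (fun S : Fin j → V => Function.Injective S),
            (((Finset.univ.filter (fun v => ∀ a, G.Adj (S a) v)).card : ℕ) : ℝ) ^ r := by
          refine Finset.sum_congr rfl fun S _ => ?_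
          rw [hNat S]
      _ = ((∑ S ∈ Finset.univ.filter (fun S : Fin j → V => Function.Injective S),
            ((Finset.univ.filter (fun v => ∀ a, G.Adj (S a) v)).card) ^ r : ℕ) : ℝ) := by
          push_cast; rfl
      _ = ((∑ U : Fin r → V,
            ((Finset.univ.filter (fun v : V => ∀ k, G.Adj (U k) v)).card).descFactorial j : ℕ) : ℝ) := by
          rw [this]
      _ = ∑ U : Fin r → V, (((M U).card).descFactorial j : ℝ) := by
          push_cast; rfl
  rw [htarget]
  have h2j1 : (0:ℝ) < 2 ^ (j + 1) := by positivity
  rw [show (1:ℝ) / 2 ^ (j + 1) * (n:ℝ) ^ (j + r) * p ^ (j * r) = Q / 2 ^ (j + 1) by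
    rw [hQ]; ring]
  rw [div_le_iff₀ h2j1]
  have : Q ≤ 2 ^ j * A * 2 := by linarith [hmain]
  calc Q ≤ 2 ^ j * A * 2 := this
    _ = A * 2 ^ (j + 1) := by rw [pow_succ]; ring
end

section
/- If H is a bipartite graph and there exists a constant c > 0 depending only on H such that t_H(G) ≥ c · t_{K_2}(G)^{e(H)} holds for all graphs G, then t_H(G) ≥ t_{K_2}(G)^{e(H)} holds for all graphs G. -/
/-!
Homomorphism densities are multiplicative under tensor powers: `t_H(G^{⊗k}) = t_H(G)^k`, and
`t_{K_2}` is the homomorphism density of `K_2`. Applying the hypothesis to `G^{⊗k}` therefore gives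
`c · (t_{K_2}(G)^{e(H)})^k ≤ t_H(G)^k` for every `k ≥ 1`; a constant `c > 0` cannot survive
`k`-th roots as `k → ∞`.
-/

/-- The homomorphism density `t_H(G) = h_H(G)/|V(G)|^{|V(H)|}`. -/
noncomputable def homDensity {α β : Type} [Fintype α] [Fintype β]
    (H : SimpleGraph α) (G : SimpleGraph β) : ℝ :=
  (Nat.card (H →g G) : ℝ) / (Fintype.card β : ℝ) ^ (Fintype.card α)

/-- The edge density `t_{K_2}(G) = 2e(G)/n²`. -/
noncomputable def edgeDensity' {β : Type} [Fintype β] (G : SimpleGraph β) : ℝ :=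
  2 * (Nat.card G.edgeSet : ℝ) / (Fintype.card β : ℝ) ^ 2

theorem le_of_forall_const_mul_pow_le {K : Type*} [Field K] [LinearOrder K]
    [IsStrictOrderedRing K] [Archimedean K] {a b c : K} (hc : 0 < c) (hb : 0 ≤ b)
    (h : ∀ n : ℕ, c * a ^ (n + 1) ≤ b ^ (n + 1)) : a ≤ b := by
  by_contra! hba
  have ha : 0 < a := hb.trans_lt hba
  have hratio : b / a < 1 := (div_lt_one ha).mpr hba
  obtain ⟨n, hn⟩ := exists_pow_lt_of_lt_one hc hratio
  have hc_le : c ≤ (b / a) ^ (n + 1) := by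
    rw [div_pow, le_div_iff₀ (pow_pos ha _)]
    exact h n
  have hdecr : (b / a) ^ (n + 1) ≤ (b / a) ^ n :=
    pow_le_pow_of_le_one (div_nonneg hb ha.le) hratio.le n.le_succ
  exact (hc_le.trans hdecr).not_gt hn

namespace SimpleGraph

variable {α β : Type}

def tensorPow (G : SimpleGraph β) (ι : Type) [Nonempty ι] : SimpleGraph (ι → β) where
  Adj f g := ∀ i, G.Adj (f i) (g i)
  symm := ⟨fun _ _ h i => (h i).symm⟩
  loopless := ⟨fun f h => G.loopless.irrefl (f (Classical.arbitrary ι)) (h _)⟩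

def homTensorPowEquiv (H : SimpleGraph α) (G : SimpleGraph β) (ι : Type) [Nonempty ι] :
    (H →g G.tensorPow ι) ≃ (ι → H →g G) where
  toFun f i := ⟨fun v => f v i, fun h => f.map_rel h i⟩
  invFun g := ⟨fun v i => g i v, fun h i => (g i).map_rel h⟩
  left_inv _ := rfl
  right_inv _ := rfl

def topFinTwoHomEquivDart (G : SimpleGraph β) : ((⊤ : SimpleGraph (Fin 2)) →g G) ≃ G.Dart where
  toFun f := ⟨(f 0, f 1), f.map_rel (by simp)⟩
  invFun d := ⟨![d.fst, d.snd], fun {i j} hij => by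
    fin_cases i <;> fin_cases j <;> simp_all [d.adj, d.adj.symm]⟩
  left_inv f := by
    ext i
    fin_cases i <;> rfl
  right_inv _ := rfl

end SimpleGraph

open SimpleGraph

theorem homDensity_nonneg {α β : Type} [Fintype α] [Fintype β]
    (H : SimpleGraph α) (G : SimpleGraph β) : 0 ≤ homDensity H G := by
  unfold homDensity
  positivity

theorem homDensity_tensorPow {α β ι : Type} [Fintype α] [Fintype β] [Fintype ι] [DecidableEq ι]
    [Nonempty ι] (H : SimpleGraph α) (G : SimpleGraph β) :
    homDensity H (G.tensorPow ι) = homDensity H G ^ Fintype.card ι := by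
  unfold homDensity
  rw [Nat.card_congr (homTensorPowEquiv H G ι), Nat.card_fun, Nat.card_eq_fintype_card (α := ι),
    Fintype.card_fun, div_pow]
  push_cast
  rw [← pow_mul, ← pow_mul, mul_comm]

theorem edgeDensity'_eq_homDensity_top {β : Type} [Fintype β] (G : SimpleGraph β) :
    edgeDensity' G = homDensity (⊤ : SimpleGraph (Fin 2)) G := by
  classical
  unfold edgeDensity' homDensity
  rw [Nat.card_congr (topFinTwoHomEquivDart G), Nat.card_eq_fintype_card (α := G.Dart),
    dart_card_eq_twice_card_edges, edgeFinset_card, Nat.card_eq_fintype_card, Fintype.card_fin]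
  norm_cast

theorem edgeDensity'_tensorPow {β ι : Type} [Fintype β] [Fintype ι] [DecidableEq ι] [Nonempty ι]
    (G : SimpleGraph β) : edgeDensity' (G.tensorPow ι) = edgeDensity' G ^ Fintype.card ι := by
  rw [edgeDensity'_eq_homDensity_top, edgeDensity'_eq_homDensity_top, homDensity_tensorPow]

theorem sidorenko_of_sidorenko_with_constant_general {α : Type} [Fintype α]
    (H : SimpleGraph α)
    (hc : ∃ c : ℝ, 0 < c ∧ ∀ (β : Type) [Fintype β] [Nonempty β] (G : SimpleGraph β),
      c * edgeDensity' G ^ (Nat.card H.edgeSet) ≤ homDensity H G) :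
    ∀ (β : Type) [Fintype β] [Nonempty β] (G : SimpleGraph β),
      edgeDensity' G ^ (Nat.card H.edgeSet) ≤ homDensity H G := by
  obtain ⟨c, hc, hsidorenko⟩ := hc
  intro β _ _ G
  refine le_of_forall_const_mul_pow_le hc (homDensity_nonneg H G) fun n => ?_
  have := hsidorenko (Fin (n + 1) → β) (G.tensorPow (Fin (n + 1)))
  rwa [homDensity_tensorPow, edgeDensity'_tensorPow, Fintype.card_fin, ← pow_mul,
    mul_comm (n + 1), pow_mul] at this

/-- **Lemma 1.2 (tensor power trick).** If a bipartite graph `H` satisfies Sidorenko's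
inequality up to a constant factor `c > 0` for all graphs `G`, then it satisfies it
exactly for all graphs `G`. -/
theorem sidorenko_of_sidorenko_with_constant {α : Type} [Fintype α]
    (H : SimpleGraph α) (hbip : H.Colorable 2)
    (hc : ∃ c : ℝ, 0 < c ∧ ∀ (β : Type) [Fintype β] [Nonempty β] (G : SimpleGraph β),
      c * edgeDensity' G ^ (Nat.card H.edgeSet) ≤ homDensity H G) :
    ∀ (β : Type) [Fintype β] [Nonempty β] (G : SimpleGraph β),
      edgeDensity' G ^ (Nat.card H.edgeSet) ≤ homDensity H G :=
  sidorenko_of_sidorenko_with_constant_general H hc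
end

section
/- Let h ≥ r be positive integers and 0 < β < 1 a real. Then there exists α > 0 depending only on h, r, β such that for every graph G on n vertices, with p = p_r(G), for all 0 ≤ i ≤ h, 1 ≤ j ≤ h, and 1 ≤ ℓ ≤ j: ∑_{S ∈ B_{i,j}} |N(S)|^ℓ ≤ β n^{j+ℓ} p^{jℓ}, where B_{i,j} is the set of length-j vertex sequences that are not i-good relative to (α, β, h, r). -/
/-- `IsGood G α β p h i j S` : the length-`j` vertex sequence `S` is `i`-good relative
to `(α, β, h, r)` in `G`, where `p = p_r(G)`. A sequence `T` is `0`-good if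
`|N(T)| ≥ α p^{|T|} n`; for `i ≥ 1`, `S` is `i`-good if it is `0`-good and for every
`|S| ≤ k ≤ h`, at least `(1-β)|N(S)|^k` of the length-`k` sequences in `N(S)` are
`(i-1)`-good. -/
def IsGood {V : Type} [Fintype V] (G : SimpleGraph V) (α β p : ℝ) (h : ℕ) :
    ℕ → (j : ℕ) → (Fin j → V) → Prop
  | 0, j, S => α * p ^ j * (Fintype.card V : ℝ) ≤ (Nat.card (commNbhd G S) : ℝ)
  | i + 1, j, S =>
      (α * p ^ j * (Fintype.card V : ℝ) ≤ (Nat.card (commNbhd G S) : ℝ)) ∧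
      ∀ k : ℕ, j ≤ k → k ≤ h →
        (1 - β) * (Nat.card (commNbhd G S) : ℝ) ^ k ≤
          (Nat.card {T : Fin k → V // (∀ a, T a ∈ commNbhd G S) ∧ IsGood G α β p h i k T} : ℝ)

/-!
Induction on `i`, for all `j` and `ℓ` at once, shrinking `α` at each level. A sequence that is
not `0`-good contributes at most `(α p^j n)^ℓ`. If `S` fails the extension condition at length
`k`, then more than `β |N(S)|^k` of the length-`k` sequences in `N(S)` are not `i`-good, so
`|N(S)|^ℓ ≤ (b_S / β)^{ℓ/k}` where `b_S` counts them. Concavity of `x ↦ x^{ℓ/k}` bounds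
`∑_S (b_S / β)^{ℓ/k}` by `n^j` times the same power of the mean, and double counting turns
`∑_S b_S` into `∑_{T not i-good} |N(T)|^j`: the level-`i` sum with `(k, j)` in place of `(j, ℓ)`.
-/

open Finset

lemma Real.sum_rpow_le_card_mul_rpow_div {ι : Type*} (s : Finset ι) {f : ι → ℝ}
    (hf : ∀ i ∈ s, 0 ≤ f i) {θ : ℝ} (hθ₀ : 0 ≤ θ) (hθ₁ : θ ≤ 1) :
    ∑ i ∈ s, f i ^ θ ≤ #s * ((∑ i ∈ s, f i) / #s) ^ θ := by
  rcases s.eq_empty_or_nonempty with rfl | hs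
  · simp
  have hN : (0 : ℝ) < #s := by exact_mod_cast hs.card_pos
  have hJensen := (Real.concaveOn_rpow hθ₀ hθ₁).le_map_sum (t := s) (w := fun _ => (#s : ℝ)⁻¹)
    (p := f) (fun _ _ => by positivity) (by simp [hN.ne']) hf
  simp only [smul_eq_mul, ← mul_sum] at hJensen
  rw [div_eq_inv_mul]
  calc ∑ i ∈ s, f i ^ θ = #s * ((#s : ℝ)⁻¹ * ∑ i ∈ s, f i ^ θ) := by field_simp
    _ ≤ _ := by gcongr

lemma Real.pow_rpow_div_natCast {x : ℝ} (hx : 0 ≤ x) {k : ℕ} (hk : k ≠ 0) (ℓ : ℕ) :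
    (x ^ k) ^ ((ℓ : ℝ) / k) = x ^ ℓ := by
  rw [div_eq_inv_mul, Real.rpow_mul (pow_nonneg hx k), Real.pow_rpow_inv_natCast hx hk,
    Real.rpow_natCast]

lemma Nat.card_subtype_and_add_card_subtype_and_not {α : Type*} [Finite α] (P Q : α → Prop) :
    Nat.card {a // P a ∧ Q a} + Nat.card {a // P a ∧ ¬ Q a} = Nat.card {a // P a} := by
  have := Fintype.ofFinite α
  classical
  simp only [Nat.card_eq_fintype_card, Fintype.card_subtype, ← filter_filter]
  exact card_filter_add_card_filter_not _

lemma Nat.card_pi_fin_mem {V : Type*} (k : ℕ) (s : Set V) :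
    Nat.card {T : Fin k → V // ∀ a, T a ∈ s} = Nat.card s ^ k := by
  rw [Nat.card_congr (Equiv.subtypePiEquivPi (p := fun _ v => v ∈ s)), Nat.card_fun,
    Nat.card_eq_fintype_card (α := Fin k), Fintype.card_fin]

section

variable {V : Type} (G : SimpleGraph V)

lemma forall_mem_commNbhd_comm {j k : ℕ} (S : Fin j → V) (T : Fin k → V) :
    (∀ a, T a ∈ commNbhd G S) ↔ ∀ b, S b ∈ commNbhd G T :=
  ⟨fun hT b a => (hT a b).symm, fun hS a b => (hS b a).symm⟩

variable [Fintype V]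

open scoped Classical in
lemma sum_card_bad_extensions {j k : ℕ} (Good : (Fin k → V) → Prop) :
    ∑ S : Fin j → V, Nat.card {T : Fin k → V // (∀ a, T a ∈ commNbhd G S) ∧ ¬ Good T} =
      ∑ T : Fin k → V, if Good T then 0 else Nat.card (commNbhd G T) ^ j := by
  simp only [Nat.card_eq_fintype_card, Fintype.card_subtype, card_filter]
  rw [sum_comm]
  refine sum_congr rfl fun T _ => ?_
  split_ifs with hT
  · simp [hT]
  · simp only [hT, not_false_eq_true, and_true, ← card_filter, ← Fintype.card_subtype,
      ← Nat.card_eq_fintype_card]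
    rw [← Nat.card_pi_fin_mem]
    exact Nat.card_congr (Equiv.subtypeEquivRight fun S => forall_mem_commNbhd_comm G S T)

open scoped Classical in
noncomputable def badPowSum (α β p : ℝ) (h i j ℓ : ℕ) : ℝ :=
  ∑ S : Fin j → V, if IsGood G α β p h i j S then 0 else (Nat.card (commNbhd G S) : ℝ) ^ ℓ

open scoped Classical in
/-- The part of `badPowSum G α β p h (i + 1) j ℓ` coming from sequences that fail the extension
condition of `IsGood` at length `k`. -/
noncomputable def badExtensionPowSum (α β p : ℝ) (h i j k ℓ : ℕ) : ℝ :=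
  ∑ S : Fin j → V, if (1 - β) * (Nat.card (commNbhd G S) : ℝ) ^ k ≤
      Nat.card {T : Fin k → V // (∀ a, T a ∈ commNbhd G S) ∧ IsGood G α β p h i k T}
    then 0 else (Nat.card (commNbhd G S) : ℝ) ^ ℓ

open scoped Classical in
lemma badPowSum_zero_le {α β p : ℝ} (hα₀ : 0 ≤ α) (hα₁ : α ≤ 1) (hp : 0 ≤ p) (h : ℕ)
    {j ℓ : ℕ} (hℓ : 1 ≤ ℓ) :
    badPowSum G α β p h 0 j ℓ ≤ α * ((Fintype.card V : ℝ) ^ (j + ℓ) * p ^ (j * ℓ)) := by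
  set n : ℝ := (Fintype.card V : ℝ)
  have hterm : ∀ S : Fin j → V, (if IsGood G α β p h 0 j S then 0
      else (Nat.card (commNbhd G S) : ℝ) ^ ℓ) ≤ (α * p ^ j * n) ^ ℓ := by
    intro S
    split_ifs with hS
    · positivity
    · exact pow_le_pow_left₀ (Nat.cast_nonneg _) (not_le.1 hS).le ℓ
  calc badPowSum G α β p h 0 j ℓ ≤ ∑ _S : Fin j → V, (α * p ^ j * n) ^ ℓ :=
        sum_le_sum fun S _ => hterm S
    _ = α ^ ℓ * (n ^ (j + ℓ) * p ^ (j * ℓ)) := by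
        simp only [sum_const, card_univ, Fintype.card_fun, Fintype.card_fin, nsmul_eq_mul]
        push_cast
        ring
    _ ≤ α * (n ^ (j + ℓ) * p ^ (j * ℓ)) := by
        gcongr
        exact pow_le_of_le_one hα₀ hα₁ (by omega)

lemma rnormDensity_nonneg [DecidableRel G.Adj] (r : ℕ) : 0 ≤ rnormDensity G r :=
  Real.rpow_nonneg (by positivity) _

lemma pow_card_commNbhd_le_card_bad_div {β : ℝ} (hβ : 0 < β) {j k : ℕ} (S : Fin j → V)
    (Good : (Fin k → V) → Prop)
    (hS : ¬ (1 - β) * (Nat.card (commNbhd G S) : ℝ) ^ k ≤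
      Nat.card {T : Fin k → V // (∀ a, T a ∈ commNbhd G S) ∧ Good T}) :
    (Nat.card (commNbhd G S) : ℝ) ^ k ≤
      Nat.card {T : Fin k → V // (∀ a, T a ∈ commNbhd G S) ∧ ¬ Good T} / β := by
  have hsplit : (Nat.card {T : Fin k → V // (∀ a, T a ∈ commNbhd G S) ∧ Good T} : ℝ) +
      Nat.card {T : Fin k → V // (∀ a, T a ∈ commNbhd G S) ∧ ¬ Good T} =
        (Nat.card (commNbhd G S) : ℝ) ^ k := by
    exact_mod_cast (Nat.card_subtype_and_add_card_subtype_and_not _ Good).trans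
      (Nat.card_pi_fin_mem k _)
  rw [le_div_iff₀ hβ]
  linarith [not_le.1 hS]

open scoped Classical in
lemma badExtensionPowSum_le {α β p δ : ℝ} (hβ₀ : 0 < β) (hβ₁ : β ≤ 1) (hp : 0 ≤ p)
    (hδ : 0 ≤ δ) {h i j k ℓ : ℕ} (hℓ : 1 ≤ ℓ) (hℓj : ℓ ≤ j) (hjk : j ≤ k)
    (hbad : badPowSum G α β p h i k j ≤
      δ ^ k * ((Fintype.card V : ℝ) ^ (k + j) * p ^ (k * j))) :
    badExtensionPowSum G α β p h i j k ℓ ≤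
      (β⁻¹ * δ) ^ ℓ * ((Fintype.card V : ℝ) ^ (j + ℓ) * p ^ (j * ℓ)) := by
  set n : ℝ := (Fintype.card V : ℝ)
  have hk : k ≠ 0 := by omega
  set θ : ℝ := (ℓ : ℝ) / k
  have hθ₀ : 0 ≤ θ := by positivity
  have hθ₁ : θ ≤ 1 := div_le_one_of_le₀ (by exact_mod_cast hℓj.trans hjk) (Nat.cast_nonneg k)
  set b : (Fin j → V) → ℝ := fun S =>
    Nat.card {T : Fin k → V // (∀ a, T a ∈ commNbhd G S) ∧ ¬ IsGood G α β p h i k T} / β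
  have hterm : ∀ S : Fin j → V, (if (1 - β) * (Nat.card (commNbhd G S) : ℝ) ^ k ≤
      Nat.card {T : Fin k → V // (∀ a, T a ∈ commNbhd G S) ∧ IsGood G α β p h i k T}
      then 0 else (Nat.card (commNbhd G S) : ℝ) ^ ℓ) ≤ b S ^ θ := by
    intro S
    split_ifs with hS
    · positivity
    · rw [← Real.pow_rpow_div_natCast (Nat.cast_nonneg _) hk ℓ]
      exact Real.rpow_le_rpow (by positivity)
        (pow_card_commNbhd_le_card_bad_div G hβ₀ S _ hS) hθ₀
  have hsum : ∑ S, b S = β⁻¹ * badPowSum G α β p h i k j := by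
    simp only [b, div_eq_inv_mul, ← mul_sum, badPowSum]
    congr 1
    exact_mod_cast sum_card_bad_extensions G (IsGood G α β p h i k)
  have hmean : (∑ S, b S) / n ^ j ≤ (β⁻¹ * δ * n * p ^ j) ^ k := by
    refine div_le_of_le_mul₀ (by positivity) (by positivity) ?_
    have hβinv : β⁻¹ ≤ β⁻¹ ^ k := le_self_pow₀ (one_le_inv₀ hβ₀ |>.2 hβ₁) hk
    calc ∑ S, b S ≤ β⁻¹ * (δ ^ k * (n ^ (k + j) * p ^ (k * j))) := by
          rw [hsum]; gcongr
      _ ≤ β⁻¹ ^ k * (δ ^ k * (n ^ (k + j) * p ^ (k * j))) := by gcongr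
      _ = (β⁻¹ * δ * n * p ^ j) ^ k * n ^ j := by ring
  calc badExtensionPowSum G α β p h i j k ℓ ≤ ∑ S, b S ^ θ := sum_le_sum fun S _ => hterm S
    _ ≤ #(univ : Finset (Fin j → V)) * ((∑ S, b S) / #(univ : Finset (Fin j → V))) ^ θ :=
        Real.sum_rpow_le_card_mul_rpow_div univ (fun S _ => by positivity) hθ₀ hθ₁
    _ = n ^ j * ((∑ S, b S) / n ^ j) ^ θ := by
        simp only [card_univ, Fintype.card_fun, Fintype.card_fin, Nat.cast_pow, n]
    _ ≤ n ^ j * ((β⁻¹ * δ * n * p ^ j) ^ k) ^ θ := by gcongr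
    _ = (β⁻¹ * δ) ^ ℓ * (n ^ (j + ℓ) * p ^ (j * ℓ)) := by
        rw [Real.pow_rpow_div_natCast (by positivity) hk]
        ring

open scoped Classical in
lemma badPowSum_succ_le {α β p : ℝ} {h i j ℓ : ℕ} :
    badPowSum G α β p h (i + 1) j ℓ ≤ badPowSum G α β p h 0 j ℓ +
      ∑ k ∈ Icc j h, badExtensionPowSum G α β p h i j k ℓ := by
  simp only [badExtensionPowSum]
  rw [sum_comm, badPowSum, badPowSum, ← sum_add_distrib]
  refine sum_le_sum fun S _ => ?_
  set x : ℝ := (Nat.card (commNbhd G S) : ℝ)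
  have hx : 0 ≤ x := Nat.cast_nonneg _
  have hbad0 : 0 ≤ if IsGood G α β p h 0 j S then 0 else x ^ ℓ := by split_ifs <;> positivity
  have hbadk : ∀ k ∈ Icc j h, 0 ≤ if (1 - β) * x ^ k ≤
      Nat.card {T : Fin k → V // (∀ a, T a ∈ commNbhd G S) ∧ IsGood G α β p h i k T}
      then 0 else x ^ ℓ := fun k _ => by split_ifs <;> positivity
  by_cases hS : IsGood G α β p h (i + 1) j S
  · rw [if_pos hS]
    exact add_nonneg hbad0 (sum_nonneg hbadk)
  rw [if_neg hS]
  simp only [IsGood, not_and_or, not_forall, not_le, exists_prop] at hS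
  rcases hS with hS0 | ⟨k, hjk, hkh, hSk⟩
  · rw [if_neg (show ¬ IsGood G α β p h 0 j S from not_le.2 hS0)]
    exact le_add_of_nonneg_right (sum_nonneg hbadk)
  · calc x ^ ℓ = if (1 - β) * x ^ k ≤
          Nat.card {T : Fin k → V // (∀ a, T a ∈ commNbhd G S) ∧ IsGood G α β p h i k T}
          then 0 else x ^ ℓ := (if_neg hSk.not_ge).symm
      _ ≤ _ := single_le_sum hbadk (mem_Icc.2 ⟨hjk, hkh⟩)
      _ ≤ _ := le_add_of_nonneg_left hbad0

end

theorem exists_forall_badPowSum_le {β : ℝ} (hβ₀ : 0 < β) (hβ₁ : β ≤ 1) (h i : ℕ) {t : ℝ}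
    (ht : 0 < t) :
    ∃ α₀ > 0, ∀ α, 0 ≤ α → α ≤ α₀ → ∀ (V : Type) [Fintype V] (G : SimpleGraph V) (p : ℝ),
      0 ≤ p → ∀ j ℓ : ℕ, 1 ≤ j → j ≤ h → 1 ≤ ℓ → ℓ ≤ j →
        badPowSum G α β p h i j ℓ ≤ t * ((Fintype.card V : ℝ) ^ (j + ℓ) * p ^ (j * ℓ)) := by
  induction i generalizing t with
  | zero =>
    refine ⟨min t 1, by positivity, fun α hα₀ hα V _ G p hp j ℓ _ _ hℓ _ => ?_⟩
    calc _ ≤ α * _ := badPowSum_zero_le G hα₀ (hα.trans (min_le_right _ _)) hp h hℓ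
      _ ≤ t * _ := by gcongr; exact hα.trans (min_le_left _ _)
  | succ i ih =>
    set γ : ℝ := min 1 (t / (2 * (h + 1)))
    have hγ₀ : 0 < γ := by positivity
    have hγ₁ : γ ≤ 1 := min_le_left _ _
    set δ := β * γ
    have hδ₀ : 0 < δ := by positivity
    have hδ₁ : δ ≤ 1 := by nlinarith
    obtain ⟨α₁, hα₁, H⟩ := ih (t := δ ^ h) (by positivity)
    refine ⟨min (min 1 (t / 2)) α₁, by positivity,
      fun α hα₀ hα V _ G p hp j ℓ hj hjh hℓ hℓj => ?_⟩
    set X : ℝ := (Fintype.card V : ℝ) ^ (j + ℓ) * p ^ (j * ℓ)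
    have hX : 0 ≤ X := by positivity
    have hk : ∀ k ∈ Icc j h, badExtensionPowSum G α β p h i j k ℓ ≤ γ * X := by
      intro k hk
      obtain ⟨hjk, hkh⟩ := mem_Icc.1 hk
      have hbad := H α hα₀ (hα.trans (min_le_right _ _)) V G p hp k j (by omega) hkh hj hjk
      calc _ ≤ (β⁻¹ * δ) ^ ℓ * X :=
            badExtensionPowSum_le G hβ₀ hβ₁ hp hδ₀.le hℓ hℓj hjk
              (hbad.trans (mul_le_mul_of_nonneg_right (pow_le_pow_of_le_one hδ₀.le hδ₁ hkh)
                (by positivity)))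
        _ = γ ^ ℓ * X := by rw [inv_mul_cancel_left₀ hβ₀.ne']
        _ ≤ γ * X := by gcongr; exact pow_le_of_le_one hγ₀.le hγ₁ (by omega)
    calc badPowSum G α β p h (i + 1) j ℓ
        ≤ α * X + ∑ k ∈ Icc j h, γ * X :=
          (badPowSum_succ_le G).trans (add_le_add
            (badPowSum_zero_le G hα₀ (hα.trans ((min_le_left _ _).trans (min_le_left _ _))) hp
              h hℓ) (sum_le_sum hk))
      _ ≤ t / 2 * X + (h + 1) * (γ * X) := by
          rw [sum_const, Nat.card_Icc, nsmul_eq_mul]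
          gcongr
          · exact hα.trans ((min_le_left _ _).trans (min_le_right _ _))
          · exact_mod_cast Nat.sub_le _ _
      _ ≤ t / 2 * X + (h + 1) * (t / (2 * (h + 1)) * X) := by gcongr; exact min_le_right _ _
      _ = t * X := by field_simp; ring

open scoped Classical in
theorem sum_bad_pow_le_general (h r : ℕ) (β : ℝ) (hβ0 : 0 < β)
    (hβ1 : β < 1) :
    ∃ α : ℝ, 0 < α ∧
      ∀ (V : Type) [Fintype V] [Nonempty V] (G : SimpleGraph V) [DecidableRel G.Adj],
        ∀ i j ℓ : ℕ, i ≤ h → 1 ≤ j → j ≤ h → 1 ≤ ℓ → ℓ ≤ j →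
          ∑ S : Fin j → V,
              (if IsGood G α β (rnormDensity G r) h i j S then 0
                else (Nat.card (commNbhd G S) : ℝ) ^ ℓ) ≤
            β * (Fintype.card V : ℝ) ^ (j + ℓ) * rnormDensity G r ^ (j * ℓ) := by
  choose α₀ hα₀ H using fun i => exists_forall_badPowSum_le hβ0 hβ1.le h i hβ0
  set α := (range (h + 1)).inf' nonempty_range_add_one α₀
  have hα : 0 < α := (lt_inf'_iff _).2 fun i _ => hα₀ i
  refine ⟨α, hα, fun V _ _ G _ i j ℓ hi hj hjh hℓ hℓj => ?_⟩
  rw [mul_assoc]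
  exact H i α hα.le (inf'_le _ (mem_range.2 (by omega))) V G _ (rnormDensity_nonneg G r) j ℓ
    hj hjh hℓ hℓj

open scoped Classical in
/-- **Lemma 3.5.** For `h ≥ r ≥ 1` and `0 < β < 1` there is `α > 0` such that for
every graph `G` on `n` vertices, with `p = p_r(G)`, for all `0 ≤ i ≤ h`,
`1 ≤ j ≤ h` and `1 ≤ ℓ ≤ j`, the sum of `|N(S)|^ℓ` over length-`j` sequences `S`
that are not `i`-good is at most `β n^{j+ℓ} p^{jℓ}`. -/
theorem sum_bad_pow_le (h r : ℕ) (hr : 1 ≤ r) (hrh : r ≤ h) (β : ℝ) (hβ0 : 0 < β)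
    (hβ1 : β < 1) :
    ∃ α : ℝ, 0 < α ∧
      ∀ (V : Type) [Fintype V] [Nonempty V] (G : SimpleGraph V) [DecidableRel G.Adj],
        ∀ i j ℓ : ℕ, i ≤ h → 1 ≤ j → j ≤ h → 1 ≤ ℓ → ℓ ≤ j →
          ∑ S : Fin j → V,
              (if IsGood G α β (rnormDensity G r) h i j S then 0
                else (Nat.card (commNbhd G S) : ℝ) ^ ℓ) ≤
            β * (Fintype.card V : ℝ) ^ (j + ℓ) * rnormDensity G r ^ (j * ℓ) :=
  sum_bad_pow_le_general h r β hβ0 hβ1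
end

section
/- Let h ≥ r be positive integers and 0 < β < 1. Then there exists α > 0 depending only on h, r, β such that for every graph G on n vertices with p = p_r(G), for all i ∈ [h] and r ≤ j ≤ h: ∑_{S ∈ A_{i,j}} |N(S)|^r ≥ (1−β) n^{j+r} p^{jr}, where A_{i,j} is the set of i-good sequences of length j relative to (α, β, h, r). In particular, there is an i-good sequence S of length j with |N(S)| ≥ (1−β)^{1/r} p^j n. -/
/-!
Double counting pairs `(S, T)` of sequences with every vertex of `T` adjacent to every vertex of
`S` gives `∑_{|S|=j} |N(S)|^m = ∑_{|T|=m} |N(T)|^j`. For `j = 1`, `m = r` both sides equal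
`∑_v d(v)^r = p^r n^{r+1}`, so Jensen's inequality yields `∑_{|S|=j} |N(S)|^r ≥ p^{jr} n^{j+r}`,
and it suffices to show that the sequences which are not `i`-good carry `|N(S)|^r`-mass at most
`β p^{jr} n^{j+r}`. By induction on `i` the mass `∑ |N(S)|^m` of non-`i`-good sequences is at
most `ε_i p^{jm} n^{j+m}` for all `1 ≤ m ≤ j ≤ h`: if more than a `β`-fraction of the `k`-tuples
in `N(S)` are not `i`-good, the same double counting bounds `∑ |N(S)|^k` over such `S` by `β⁻¹`
times the level-`i` mass with exponent `j`, and Hölder's inequality passes from exponent `k` to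
`m`. Each `ε_i` tends to `0` with `α`, so a small `α > 0` makes all of them at most `β`.
-/

open Finset Filter Topology

theorem pow_sum_pow_le_card_pow_mul_pow {ι : Type*} (s : Finset ι) {f : ι → ℝ}
    (hf : ∀ i ∈ s, 0 ≤ f i) {m k : ℕ} (hm : m ≠ 0) (hmk : m ≤ k) :
    (∑ i ∈ s, f i ^ m) ^ k ≤ (#s : ℝ) ^ (k - m) * (∑ i ∈ s, f i ^ k) ^ m := by
  have hm' : (0 : ℝ) < m := by positivity
  have hkm : (1 : ℝ) ≤ k / m := by rw [one_le_div hm']; exact_mod_cast hmk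
  have rpow_div_pow {x : ℝ} (hx : 0 ≤ x) : (x ^ ((k : ℝ) / m)) ^ m = x ^ k := by
    rw [← Real.rpow_mul_natCast hx, div_mul_cancel₀ _ hm'.ne', Real.rpow_natCast]
  have holder := Real.rpow_sum_le_const_mul_sum_rpow_of_nonneg (s := s) (f := fun i => f i ^ m)
    hkm fun i hi => pow_nonneg (hf i hi) m
  have hpow : ∀ i ∈ s, (f i ^ m) ^ ((k : ℝ) / m) = f i ^ k := fun i hi => by
    rw [← Real.rpow_natCast, ← Real.rpow_mul (hf i hi), mul_div_cancel₀ _ hm'.ne',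
      Real.rpow_natCast]
  rw [sum_congr rfl hpow] at holder
  have hs : (0 : ℝ) ≤ #s := by positivity
  have hsum : 0 ≤ ∑ i ∈ s, f i ^ m := sum_nonneg fun i hi => pow_nonneg (hf i hi) m
  calc (∑ i ∈ s, f i ^ m) ^ k
      = ((∑ i ∈ s, f i ^ m) ^ ((k : ℝ) / m)) ^ m := (rpow_div_pow hsum).symm
    _ ≤ ((#s : ℝ) ^ ((k : ℝ) / m - 1) * ∑ i ∈ s, f i ^ k) ^ m :=
        pow_le_pow_left₀ (Real.rpow_nonneg hsum _) holder m
    _ = (#s : ℝ) ^ (k - m) * (∑ i ∈ s, f i ^ k) ^ m := by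
        rw [mul_pow, ← Real.rpow_mul_natCast hs, sub_mul, div_mul_cancel₀ _ hm'.ne', one_mul,
          ← Nat.cast_sub hmk, Real.rpow_natCast]

theorem pow_le_rpow_inv_add_pow {c : ℝ} (hc : 0 ≤ c) {m k h : ℕ} (hm : m ≠ 0) (hmk : m ≤ k)
    (hkh : k ≤ h) : c ^ m ≤ (c ^ (h : ℝ)⁻¹ + c) ^ k := by
  rcases le_total c 1 with hc1 | hc1
  · have hh : (0 : ℝ) < h := by norm_cast; omega
    calc c ^ m ≤ c ^ (1 : ℝ) := by
          rw [Real.rpow_one]; exact pow_le_of_le_one hc hc1 hm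
      _ ≤ c ^ ((h : ℝ)⁻¹ * k) := by
          refine Real.rpow_le_rpow_of_exponent_ge' hc hc1 (by positivity) ?_
          rw [inv_mul_le_one₀ hh]; exact_mod_cast hkh
      _ = (c ^ (h : ℝ)⁻¹) ^ k := Real.rpow_mul_natCast hc _ _
      _ ≤ (c ^ (h : ℝ)⁻¹ + c) ^ k := by gcongr; linarith
  · calc c ^ m ≤ c ^ k := pow_le_pow_right₀ hc1 hmk
      _ ≤ (c ^ (h : ℝ)⁻¹ + c) ^ k := by gcongr; linarith [Real.rpow_nonneg hc (h : ℝ)⁻¹]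

theorem Finset.sum_filter_le_add_sum_sum_filter {ι κ : Type*} (s : Finset ι) (t : Finset κ)
    {f : ι → ℝ} (hf : ∀ i ∈ s, 0 ≤ f i) {P Q : ι → Prop} {R : κ → ι → Prop}
    [DecidablePred P] [DecidablePred Q] [∀ k, DecidablePred (R k)]
    (hPQR : ∀ i ∈ s, P i → Q i ∨ ∃ k ∈ t, R k i) :
    ∑ i ∈ s with P i, f i ≤ ∑ i ∈ s with Q i, f i + ∑ k ∈ t, ∑ i ∈ s with R k i, f i := by
  simp only [sum_filter]
  rw [sum_comm, ← sum_add_distrib]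
  refine sum_le_sum fun i hi => ?_
  have hR : 0 ≤ ∑ k ∈ t, if R k i then f i else 0 :=
    sum_nonneg fun k _ => by split_ifs <;> simp [hf i hi]
  split_ifs with hP hQ hQ
  · linarith
  · obtain ⟨k, hk, hRk⟩ := (hPQR i hi hP).resolve_left hQ
    simpa [hRk] using single_le_sum (f := fun k => if R k i then f i else 0)
      (fun k _ => by split_ifs <;> simp [hf i hi]) hk
  · linarith [hf i hi]
  · linarith

theorem exists_le_of_card_mul_le_sum_ite {ι : Type*} [Fintype ι] [Nonempty ι] {P : ι → Prop}
    [DecidablePred P] {f : ι → ℝ} {c : ℝ} (hc : 0 < c)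
    (hsum : Fintype.card ι * c ≤ ∑ i, if P i then f i else 0) : ∃ i, P i ∧ c ≤ f i := by
  rw [← nsmul_eq_mul, ← card_univ, ← sum_const] at hsum
  obtain ⟨i, -, hi⟩ := exists_le_of_sum_le univ_nonempty hsum
  by_cases hP : P i
  · exact ⟨i, hP, by simpa [hP] using hi⟩
  · simp only [hP, if_false] at hi
    linarith

theorem natCard_and_add_natCard_and_not {α : Type*} [Finite α] (P Q : α → Prop) :
    Nat.card {x // P x ∧ Q x} + Nat.card {x // P x ∧ ¬Q x} = Nat.card {x // P x} := by
  classical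
  have := Fintype.ofFinite α
  simp only [Nat.card_eq_fintype_card, Fintype.card_subtype, ← filter_filter]
  exact card_filter_add_card_filter_not _

theorem natCard_forall_mem_eq_pow {α : Type*} (s : Set α) (k : ℕ) :
    Nat.card {T : Fin k → α // ∀ a, T a ∈ s} = Nat.card s ^ k := by
  rw [Nat.card_congr Equiv.subtypePiEquivPi, Nat.card_fun, Nat.card_fin]

namespace NestedGoodness

variable {V : Type}

theorem forall_mem_commNbhd_comm (G : SimpleGraph V) {j k : ℕ} (S : Fin j → V)
    (T : Fin k → V) : (∀ a, T a ∈ commNbhd G S) ↔ ∀ b, S b ∈ commNbhd G T :=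
  ⟨fun hT b a => (hT a b).symm, fun hS a b => (hS b a).symm⟩

def FewInCommNbhd (G : SimpleGraph V) (β : ℝ) {j k : ℕ} (Q : (Fin k → V) → Prop)
    (S : Fin j → V) : Prop :=
  (Nat.card {T : Fin k → V // (∀ a, T a ∈ commNbhd G S) ∧ Q T} : ℝ) <
    (1 - β) * (Nat.card (commNbhd G S) : ℝ) ^ k

variable [Fintype V] (G : SimpleGraph V)

theorem sum_natCard_tuples_commNbhd (j k : ℕ) (P : (Fin k → V) → Prop) [DecidablePred P] :
    ∑ S : Fin j → V, Nat.card {T : Fin k → V // (∀ a, T a ∈ commNbhd G S) ∧ P T} =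
      ∑ T : Fin k → V with P T, Nat.card (commNbhd G T) ^ j := by
  classical
  simp_rw [Nat.card_eq_fintype_card, Fintype.card_subtype, card_filter]
  rw [sum_comm, sum_filter]
  refine sum_congr rfl fun T _ => ?_
  split_ifs with hP
  · simp only [hP, and_true, forall_mem_commNbhd_comm G _ T, ← card_filter,
      ← Fintype.card_subtype, ← Nat.card_eq_fintype_card]
    exact natCard_forall_mem_eq_pow _ _
  · simp [hP]

theorem sum_natCard_commNbhd_pow_comm (j m : ℕ) :
    ∑ S : Fin j → V, Nat.card (commNbhd G S) ^ m =
      ∑ T : Fin m → V, Nat.card (commNbhd G T) ^ j := by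
  simpa [natCard_forall_mem_eq_pow] using sum_natCard_tuples_commNbhd G j m (fun _ => True)

theorem sum_natCard_commNbhd_eq_sum_degree_pow [DecidableRel G.Adj] (r : ℕ) :
    ∑ T : Fin r → V, Nat.card (commNbhd G T) = ∑ v, G.degree v ^ r := by
  have hcomm := sum_natCard_commNbhd_pow_comm G 1 r
  simp only [pow_one] at hcomm
  rw [← hcomm, ← (Equiv.funUnique (Fin 1) V).symm.sum_comp]
  refine sum_congr rfl fun v _ => ?_
  rw [← G.card_neighborSet_eq_degree, ← Nat.card_eq_fintype_card]
  congr
  ext w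
  simp [commNbhd]

section Density

variable [DecidableRel G.Adj] {r : ℕ}

theorem rnormDensity_nonneg : 0 ≤ rnormDensity G r := by
  unfold rnormDensity; positivity

theorem rnormDensity_pow_mul [Nonempty V] (hr : r ≠ 0) :
    rnormDensity G r ^ r * (Fintype.card V : ℝ) ^ (r + 1) = ∑ v, (G.degree v : ℝ) ^ r := by
  rw [rnormDensity, Real.rpow_inv_natCast_pow (by positivity) hr,
    div_mul_cancel₀ _ (by positivity)]

theorem rnormDensity_pow_mul_le_sum [Nonempty V] (hr : r ≠ 0) {j : ℕ} (hj : j ≠ 0) :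
    rnormDensity G r ^ (j * r) * (Fintype.card V : ℝ) ^ (j + r) ≤
      ∑ S : Fin j → V, (Nat.card (commNbhd G S) : ℝ) ^ r := by
  obtain ⟨i, rfl⟩ : ∃ i, j = i + 1 := ⟨j - 1, by omega⟩
  have hsum : ∑ T : Fin r → V, (Nat.card (commNbhd G T) : ℝ) =
      rnormDensity G r ^ r * (Fintype.card V : ℝ) ^ (r + 1) := by
    rw [rnormDensity_pow_mul G hr]
    exact_mod_cast sum_natCard_commNbhd_eq_sum_degree_pow G r
  have hjensen := pow_sum_div_card_le_sum_pow (s := univ)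
    (f := fun T : Fin r → V => (Nat.card (commNbhd G T) : ℝ)) (fun _ _ => by positivity) i
  rw [hsum, card_univ, Fintype.card_fun, Fintype.card_fin, Nat.cast_pow] at hjensen
  have hcomm : ∑ S : Fin (i + 1) → V, (Nat.card (commNbhd G S) : ℝ) ^ r =
      ∑ T : Fin r → V, (Nat.card (commNbhd G T) : ℝ) ^ (i + 1) := by
    exact_mod_cast sum_natCard_commNbhd_pow_comm G (i + 1) r
  rw [hcomm]
  refine le_of_eq_of_le ?_ hjensen
  rw [eq_div_iff (by positivity)]
  ring

end Density

/-- Bounds `∑ |N(S)|^m` over the length-`j` sequences `S` that are not `i`-good, in units of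
`p^{jm} n^{j+m}`. A sequence failing level `i + 1` fails `0`-goodness (cost `α`) or, for one of at
most `h` lengths `k`, has too few good `k`-tuples in `N(S)`; Hölder turns the level-`i` bound `ε`
into `(ε/β)^{m/k} ≤ (ε/β)^{1/h} + ε/β`. -/
noncomputable def badMassBound (α β : ℝ) (h : ℕ) : ℕ → ℝ
  | 0 => α
  | i + 1 => α + h * ((badMassBound α β h i / β) ^ (h : ℝ)⁻¹ + badMassBound α β h i / β)

theorem badMassBound_nonneg {α β : ℝ} (hα : 0 ≤ α) (hβ : 0 ≤ β) (h : ℕ) :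
    ∀ i, 0 ≤ badMassBound α β h i
  | 0 => hα
  | i + 1 =>
    have hdiv := div_nonneg (badMassBound_nonneg hα hβ h i) hβ
    add_nonneg hα (mul_nonneg h.cast_nonneg (add_nonneg (Real.rpow_nonneg hdiv _) hdiv))

theorem tendsto_badMassBound (β : ℝ) (h i : ℕ) :
    Tendsto (fun α => badMassBound α β h i) (𝓝 0) (𝓝 0) := by
  induction i with
  | zero => exact tendsto_id
  | succ i ih =>
    have hdiv : Tendsto (fun α => badMassBound α β h i / β) (𝓝 0) (𝓝 0) := by
      simpa using ih.div_const β
    have hsucc := tendsto_id.add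
      (((hdiv.rpow_const (p := (h : ℝ)⁻¹) (Or.inr (by positivity))).add hdiv).const_mul (h : ℝ))
    rcases eq_or_ne h 0 with rfl | hh
    · simpa [badMassBound] using hsucc
    · simpa [badMassBound, Real.zero_rpow, hh] using hsucc

theorem exists_badMassBound_le {β : ℝ} (hβ : 0 < β) (h : ℕ) :
    ∃ α, 0 < α ∧ α ≤ 1 ∧ ∀ i ≤ h, badMassBound α β h i ≤ β := by
  have hsmall : ∀ᶠ α in 𝓝 0, α ≤ 1 ∧ ∀ i ∈ Iic h, badMassBound α β h i ≤ β :=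
    (eventually_le_nhds zero_lt_one).and <| (eventually_all_finset _).2 fun i _ =>
      (tendsto_badMassBound β h i).eventually_le_const hβ
  obtain ⟨α, ⟨hα1, hαβ⟩, hα0⟩ := ((hsmall.filter_mono nhdsWithin_le_nhds).and
    (self_mem_nhdsWithin (s := Set.Ioi 0))).exists
  exact ⟨α, hα0, hα1, fun i hi => hαβ i (mem_Iic.2 hi)⟩

section Goodness

open scoped Classical

variable {α β p : ℝ} {h : ℕ}

theorem isGood_of_density_zero (hβ : 0 ≤ β) :
    ∀ i {j : ℕ}, j ≠ 0 → ∀ S : Fin j → V, IsGood G α β 0 h i j S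
  | 0, j, hj, S => by simp [IsGood, zero_pow hj]
  | i + 1, j, hj, S => by
    refine ⟨by simp [zero_pow hj], fun k hjk _ => ?_⟩
    have hgood := fun T : Fin k → V => isGood_of_density_zero hβ i (by omega) T
    simp only [hgood, and_true, natCard_forall_mem_eq_pow, Nat.cast_pow]
    exact mul_le_of_le_one_left (by positivity) (by linarith)

theorem sum_pow_not_isGood_zero_le (hα0 : 0 ≤ α) (hα1 : α ≤ 1) (hp : 0 ≤ p) {j m : ℕ}
    (hm : m ≠ 0) :
    ∑ S : Fin j → V with ¬IsGood G α β p h 0 j S, (Nat.card (commNbhd G S) : ℝ) ^ m ≤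
      α * p ^ (j * m) * (Fintype.card V : ℝ) ^ (j + m) := by
  calc ∑ S : Fin j → V with ¬IsGood G α β p h 0 j S, (Nat.card (commNbhd G S) : ℝ) ^ m
      ≤ ∑ S : Fin j → V with ¬IsGood G α β p h 0 j S,
          (α * p ^ j * (Fintype.card V : ℝ)) ^ m :=
        sum_le_sum fun S hS =>
          pow_le_pow_left₀ (by positivity) (not_le.1 (mem_filter.1 hS).2).le m
    _ ≤ ∑ _S : Fin j → V, (α * p ^ j * (Fintype.card V : ℝ)) ^ m :=
        sum_le_sum_of_subset_of_nonneg (filter_subset _ _) fun _ _ _ => by positivity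
    _ = α ^ m * (p ^ (j * m) * (Fintype.card V : ℝ) ^ (j + m)) := by
        simp only [sum_const, card_univ, Fintype.card_fun, Fintype.card_fin, nsmul_eq_mul]
        push_cast
        ring
    _ ≤ α * p ^ (j * m) * (Fintype.card V : ℝ) ^ (j + m) := by
        rw [mul_assoc]
        exact mul_le_mul_of_nonneg_right (pow_le_of_le_one hα0 hα1 hm) (by positivity)

theorem sum_pow_fewInCommNbhd_le (hβ : 0 < β) {j k : ℕ} (Q : (Fin k → V) → Prop) :
    ∑ S : Fin j → V with FewInCommNbhd G β Q S, (Nat.card (commNbhd G S) : ℝ) ^ k ≤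
      β⁻¹ * ∑ T : Fin k → V with ¬Q T, (Nat.card (commNbhd G T) : ℝ) ^ j := by
  have hcount : ∑ S : Fin j → V,
      (Nat.card {T : Fin k → V // (∀ a, T a ∈ commNbhd G S) ∧ ¬Q T} : ℝ) =
        ∑ T : Fin k → V with ¬Q T, (Nat.card (commNbhd G T) : ℝ) ^ j := by
    exact_mod_cast sum_natCard_tuples_commNbhd G j k (fun T => ¬Q T)
  rw [← hcount, mul_sum]
  refine (sum_le_sum fun S hS => ?_).trans
    (sum_le_sum_of_subset_of_nonneg (filter_subset _ _) fun _ _ _ => by positivity)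
  have hfew : FewInCommNbhd G β Q S := (mem_filter.1 hS).2
  have hsplit : (Nat.card {T : Fin k → V // (∀ a, T a ∈ commNbhd G S) ∧ Q T} : ℝ) +
      Nat.card {T : Fin k → V // (∀ a, T a ∈ commNbhd G S) ∧ ¬Q T} =
        (Nat.card (commNbhd G S) : ℝ) ^ k := by
    rw [← Nat.cast_pow, ← natCard_forall_mem_eq_pow]
    exact_mod_cast natCard_and_add_natCard_and_not _ Q
  rw [FewInCommNbhd] at hfew
  rw [le_inv_mul_iff₀ hβ]
  linarith

theorem sum_pow_fewInCommNbhd_le_of_sum_pow_not_le {ε : ℝ} (hβ : 0 < β) (hε : 0 ≤ ε)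
    (hp : 0 ≤ p) {j k m : ℕ} (hm : m ≠ 0) (hmj : m ≤ j) (hjk : j ≤ k) (hkh : k ≤ h)
    (Q : (Fin k → V) → Prop)
    (hQ : ∑ T : Fin k → V with ¬Q T, (Nat.card (commNbhd G T) : ℝ) ^ j ≤
      ε * p ^ (k * j) * (Fintype.card V : ℝ) ^ (k + j)) :
    ∑ S : Fin j → V with FewInCommNbhd G β Q S, (Nat.card (commNbhd G S) : ℝ) ^ m ≤
      ((ε / β) ^ (h : ℝ)⁻¹ + ε / β) * (p ^ (j * m) * (Fintype.card V : ℝ) ^ (j + m)) := by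
  set n : ℝ := (Fintype.card V : ℝ)
  set W : Finset (Fin j → V) := {S | FewInCommNbhd G β Q S}
  have hW : (#W : ℝ) ≤ n ^ j := by
    have hcard : #W ≤ Fintype.card V ^ j := by
      simpa only [card_univ, Fintype.card_fun, Fintype.card_fin] using
        card_filter_le (univ : Finset (Fin j → V)) _
    show (#W : ℝ) ≤ (Fintype.card V : ℝ) ^ j
    exact_mod_cast hcard
  have hWk : ∑ S ∈ W, (Nat.card (commNbhd G S) : ℝ) ^ k ≤ ε / β * p ^ (k * j) * n ^ (k + j) :=
    (sum_pow_fewInCommNbhd_le G hβ Q).trans <| by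
      rw [div_eq_inv_mul, mul_assoc, mul_assoc]
      exact mul_le_mul_of_nonneg_left (by simpa only [mul_assoc] using hQ) (by positivity)
  obtain ⟨d, rfl⟩ := Nat.exists_eq_add_of_le (hmj.trans hjk)
  refine (pow_le_pow_iff_left₀ (sum_nonneg fun _ _ => by positivity) (by positivity)
    (by omega : m + d ≠ 0)).1 ?_
  calc (∑ S ∈ W, (Nat.card (commNbhd G S) : ℝ) ^ m) ^ (m + d)
      ≤ (#W : ℝ) ^ d * (∑ S ∈ W, (Nat.card (commNbhd G S) : ℝ) ^ (m + d)) ^ m := by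
        simpa using pow_sum_pow_le_card_pow_mul_pow W (fun _ _ => by positivity) hm
          (Nat.le_add_right m d)
    _ ≤ (n ^ j) ^ d * (ε / β * p ^ ((m + d) * j) * n ^ (m + d + j)) ^ m := by gcongr
    _ = (ε / β) ^ m * (p ^ (j * m) * n ^ (j + m)) ^ (m + d) := by ring
    _ ≤ ((ε / β) ^ (h : ℝ)⁻¹ + ε / β) ^ (m + d) * (p ^ (j * m) * n ^ (j + m)) ^ (m + d) := by
        gcongr
        exact pow_le_rpow_inv_add_pow (by positivity) hm (Nat.le_add_right m d) hkh
    _ = _ := (mul_pow _ _ _).symm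

theorem not_isGood_zero_or_fewInCommNbhd_of_not_isGood_succ {i j : ℕ} {S : Fin j → V}
    (hS : ¬IsGood G α β p h (i + 1) j S) :
    ¬IsGood G α β p h 0 j S ∨ ∃ k ∈ Icc j h, FewInCommNbhd G β (IsGood G α β p h i k) S := by
  simp only [IsGood, FewInCommNbhd, not_and_or, not_forall, not_le, mem_Icc, exists_prop] at hS ⊢
  tauto

theorem sum_pow_not_isGood_le (hα0 : 0 ≤ α) (hα1 : α ≤ 1) (hβ : 0 < β) (hp : 0 ≤ p) :
    ∀ i {j m : ℕ}, m ≠ 0 → m ≤ j → j ≤ h →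
      ∑ S : Fin j → V with ¬IsGood G α β p h i j S, (Nat.card (commNbhd G S) : ℝ) ^ m ≤
        badMassBound α β h i * p ^ (j * m) * (Fintype.card V : ℝ) ^ (j + m)
  | 0, _, _, hm, _, _ => sum_pow_not_isGood_zero_le G hα0 hα1 hp hm
  | i + 1, j, m, hm, hmj, hjh => by
    set ε := badMassBound α β h i
    set y := p ^ (j * m) * (Fintype.card V : ℝ) ^ (j + m)
    have hε : 0 ≤ ε := badMassBound_nonneg hα0 hβ.le h i
    have hk : ∀ k ∈ Icc j h, ∑ S : Fin j → V with FewInCommNbhd G β (IsGood G α β p h i k) S,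
        (Nat.card (commNbhd G S) : ℝ) ^ m ≤
        ((ε / β) ^ (h : ℝ)⁻¹ + ε / β) * y := fun k hk =>
      have ⟨hjk, hkh⟩ := mem_Icc.1 hk
      sum_pow_fewInCommNbhd_le_of_sum_pow_not_le G hβ hε hp hm hmj hjk hkh _
        (sum_pow_not_isGood_le hα0 hα1 hβ hp i (by omega) hjk hkh)
    have hIcc : ((Icc j h).card : ℝ) ≤ h := by rw [Nat.card_Icc]; norm_cast; omega
    calc ∑ S : Fin j → V with ¬IsGood G α β p h (i + 1) j S, (Nat.card (commNbhd G S) : ℝ) ^ m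
        ≤ ∑ S : Fin j → V with ¬IsGood G α β p h 0 j S, (Nat.card (commNbhd G S) : ℝ) ^ m +
          ∑ k ∈ Icc j h, ∑ S : Fin j → V with FewInCommNbhd G β (IsGood G α β p h i k) S,
            (Nat.card (commNbhd G S) : ℝ) ^ m :=
          sum_filter_le_add_sum_sum_filter _ _ (fun _ _ => by positivity)
            fun _ _ => not_isGood_zero_or_fewInCommNbhd_of_not_isGood_succ G
      _ ≤ α * y + ∑ _k ∈ Icc j h, ((ε / β) ^ (h : ℝ)⁻¹ + ε / β) * y := by
          rw [← mul_assoc]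
          exact add_le_add (sum_pow_not_isGood_zero_le G hα0 hα1 hp hm) (sum_le_sum hk)
      _ ≤ α * y + h * (((ε / β) ^ (h : ℝ)⁻¹ + ε / β) * y) := by
          rw [sum_const, nsmul_eq_mul]
          gcongr
      _ = badMassBound α β h (i + 1) * y := by rw [badMassBound]; ring
      _ = _ := by ring

end Goodness

end NestedGoodness

open NestedGoodness Finset

open scoped Classical in
theorem nested_goodness_general (h r : ℕ) (hr : 1 ≤ r) (β : ℝ) (hβ0 : 0 < β)
    (hβ1 : β < 1) :
    ∃ α : ℝ, 0 < α ∧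
      ∀ (V : Type) [Fintype V] [Nonempty V] (G : SimpleGraph V) [DecidableRel G.Adj],
        ∀ i j : ℕ, 1 ≤ i → i ≤ h → r ≤ j → j ≤ h →
          ((1 - β) * (Fintype.card V : ℝ) ^ (j + r) * rnormDensity G r ^ (j * r) ≤
            ∑ S : Fin j → V,
              (if IsGood G α β (rnormDensity G r) h i j S then
                (Nat.card (commNbhd G S) : ℝ) ^ r else 0)) ∧
          ∃ S : Fin j → V, IsGood G α β (rnormDensity G r) h i j S ∧
            (1 - β) ^ ((r : ℝ)⁻¹) * rnormDensity G r ^ j * (Fintype.card V : ℝ) ≤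
              (Nat.card (commNbhd G S) : ℝ) := by
  obtain ⟨α, hα0, hα1, hαβ⟩ := exists_badMassBound_le hβ0 h
  refine ⟨α, hα0, fun V _ _ G _ i j _ hih hrj hjh => ?_⟩
  set p := rnormDensity G r
  set n : ℝ := (Fintype.card V : ℝ)
  have hp : 0 ≤ p := rnormDensity_nonneg G
  have hβ' : 0 < 1 - β := sub_pos.2 hβ1
  have hgood : (1 - β) * n ^ (j + r) * p ^ (j * r) ≤ ∑ S : Fin j → V,
      if IsGood G α β p h i j S then (Nat.card (commNbhd G S) : ℝ) ^ r else 0 := by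
    have htotal := rnormDensity_pow_mul_le_sum G (r := r) (by omega) (j := j) (by omega)
    have hbad := (sum_pow_not_isGood_le G hα0.le hα1 hβ0 hp i (by omega) hrj hjh).trans
      (mul_le_mul_of_nonneg_right (mul_le_mul_of_nonneg_right (hαβ i hih) (by positivity))
        (by positivity))
    rw [← sum_filter_add_sum_filter_not univ (fun S => IsGood G α β p h i j S)] at htotal
    rw [← sum_filter]
    linarith
  refine ⟨hgood, ?_⟩
  rcases hp.eq_or_lt with hp0 | hp0
  · refine ⟨fun _ => Classical.arbitrary V, ?_, ?_⟩
    · rw [← hp0]; exact isGood_of_density_zero G hβ0.le i (by omega) _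
    · rw [← hp0, zero_pow (by omega)]; simp
  · obtain ⟨S, hS, hSr⟩ := exists_le_of_card_mul_le_sum_ite
      (c := (1 - β) * p ^ (j * r) * n ^ r) (by positivity)
      (hgood.trans' (le_of_eq (by simp [n]; ring)))
    refine ⟨S, hS, (pow_le_pow_iff_left₀ (by positivity) (by positivity) (by omega : r ≠ 0)).1 ?_⟩
    rwa [mul_pow, mul_pow, Real.rpow_inv_natCast_pow (by linarith) (by omega), ← pow_mul]

open scoped Classical in
/-- **Theorem 3.2 (nested goodness lemma).** For `h ≥ r ≥ 1` and `0 < β < 1` there is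
`α > 0` such that for every graph `G` on `n` vertices, with `p = p_r(G)`, for all
`i ∈ [h]` and `r ≤ j ≤ h`, the sum of `|N(S)|^r` over `i`-good length-`j` sequences
is at least `(1-β) n^{j+r} p^{jr}`; in particular some `i`-good sequence `S` of
length `j` has `|N(S)| ≥ (1-β)^{1/r} p^j n`. -/
theorem nested_goodness (h r : ℕ) (hr : 1 ≤ r) (hrh : r ≤ h) (β : ℝ) (hβ0 : 0 < β)
    (hβ1 : β < 1) :
    ∃ α : ℝ, 0 < α ∧
      ∀ (V : Type) [Fintype V] [Nonempty V] (G : SimpleGraph V) [DecidableRel G.Adj],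
        ∀ i j : ℕ, 1 ≤ i → i ≤ h → r ≤ j → j ≤ h →
          ((1 - β) * (Fintype.card V : ℝ) ^ (j + r) * rnormDensity G r ^ (j * r) ≤
            ∑ S : Fin j → V,
              (if IsGood G α β (rnormDensity G r) h i j S then
                (Nat.card (commNbhd G S) : ℝ) ^ r else 0)) ∧
          ∃ S : Fin j → V, IsGood G α β (rnormDensity G r) h i j S ∧
            (1 - β) ^ ((r : ℝ)⁻¹) * rnormDensity G r ^ j * (Fintype.card V : ℝ) ≤
              (Nat.card (commNbhd G S) : ℝ) :=
  nested_goodness_general h r hr β hβ0 hβ1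
end
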